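/- arXiv:1005.1709 — 2 statements merged into one kernel-verified Lean document; each statement's English description precedes it below -/
import Mathlib

section
/- Let Δ be an irreducible root system in a Euclidean space with inner product normalized so that long roots have squared length 2, and suppose Δ is not of type G₂. If α and β are short roots with α ≠ ±β and α - β lies in the lattice generated by the long roots, then ⟨α, β⟩ = 0 and α - β is a long root. -/
/-! Long roots have integral inner products with all roots, so the lattice `Q_L` they generate
is integral and even. Write `v ∈ Q_L` of norm `2` as a sum of long roots; some summand `γ` has
`⟪v, γ⟫ > 0`, and integrality leaves `⟪v, γ⟫ = 2`, i.e. `v = γ`, or `⟪v, γ⟫ = 1`. In the latter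
case `v - γ` is a shorter sum of norm `2`, hence a root by induction, and as `⟪γ, v - γ⟫ = -1`
the reflection in `γ` sends `v - γ` to `v`. For short roots `α ≠ ±β`, the norm `2 - 2⟪α, β⟫`
of `α - β` lies strictly between `0` and `4` and is even, so it is `2`. -/

open scoped RealInnerProductSpace

/-- A (crystallographic, reduced) root system in a real inner product space. -/
structure IsRootSystem {E : Type*} [NormedAddCommGroup E] [InnerProductSpace ℝ E]
    (Δ : Set E) : Prop where
  finite : Δ.Finite
  nonzero : (0 : E) ∉ Δ
  spans : Submodule.span ℝ Δ = ⊤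
  reflect : ∀ x ∈ Δ, ∀ y ∈ Δ, y - (2 * ⟪x, y⟫ / ⟪x, x⟫) • x ∈ Δ
  crystallographic : ∀ x ∈ Δ, ∀ y ∈ Δ, ∃ n : ℤ, 2 * ⟪x, y⟫ / ⟪x, x⟫ = (n : ℝ)
  reduced : ∀ x ∈ Δ, ∀ c : ℝ, c • x ∈ Δ → c = 1 ∨ c = -1

/-- Irreducibility: no splitting into two nonempty mutually orthogonal parts. -/
def IsIrreducibleRootSystem {E : Type*} [NormedAddCommGroup E] [InnerProductSpace ℝ E]
    (Δ : Set E) : Prop :=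
  ∀ Δ₁ Δ₂ : Set E, Δ = Δ₁ ∪ Δ₂ → (∀ x ∈ Δ₁, ∀ y ∈ Δ₂, ⟪x, y⟫ = 0) →
    Δ₁ = ∅ ∨ Δ₂ = ∅

section IntegralLattice

variable {E : Type*} [NormedAddCommGroup E] [InnerProductSpace ℝ E] {S : Set E}

lemma exists_int_inner_of_mem_closure_right {w : E} (hw : ∀ x ∈ S, ∃ n : ℤ, ⟪w, x⟫ = n)
    {v : E} (hv : v ∈ AddSubgroup.closure S) : ∃ n : ℤ, ⟪w, v⟫ = n := by
  let L : AddSubgroup E := (Int.castAddHom ℝ).range.comap (innerₗ E w).toAddMonoidHom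
  have hSL : AddSubgroup.closure S ≤ L :=
    (AddSubgroup.closure_le L).mpr fun x hx => by
      obtain ⟨n, hn⟩ := hw x hx
      exact ⟨n, by simp [hn]⟩
  obtain ⟨n, hn⟩ := hSL hv
  exact ⟨n, by simpa using hn.symm⟩

lemma exists_int_inner_of_mem_closure (hS : ∀ x ∈ S, ∀ y ∈ S, ∃ n : ℤ, ⟪x, y⟫ = n)
    {u v : E} (hu : u ∈ AddSubgroup.closure S) (hv : v ∈ AddSubgroup.closure S) :
    ∃ n : ℤ, ⟪u, v⟫ = n := by
  refine exists_int_inner_of_mem_closure_right (fun x hx => ?_) hv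
  obtain ⟨n, hn⟩ := exists_int_inner_of_mem_closure_right (hS x hx) hu
  exact ⟨n, by rw [real_inner_comm, hn]⟩

lemma exists_inner_self_eq_two_mul_of_mem_closure (hS2 : ∀ x ∈ S, ⟪x, x⟫ = 2)
    (hS : ∀ x ∈ S, ∀ y ∈ S, ∃ n : ℤ, ⟪x, y⟫ = n) {v : E} (hv : v ∈ AddSubgroup.closure S) :
    ∃ n : ℤ, ⟪v, v⟫ = 2 * n := by
  induction hv using AddSubgroup.closure_induction with
  | mem x hx => exact ⟨1, by rw [hS2 x hx]; norm_num⟩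
  | zero => exact ⟨0, by simp⟩
  | add x y hx hy ihx ihy =>
    obtain ⟨a, ha⟩ := ihx
    obtain ⟨b, hb⟩ := ihy
    obtain ⟨m, hm⟩ := exists_int_inner_of_mem_closure hS hx hy
    exact ⟨a + m + b, by rw [real_inner_add_add_self, ha, hb, hm]; push_cast; ring⟩
  | neg x _ ih => simpa only [inner_neg_neg] using ih

end IntegralLattice

section RootSystem

variable {E : Type*} [NormedAddCommGroup E] [InnerProductSpace ℝ E] {Δ : Set E}

def longRoots (Δ : Set E) : Set E := {x | x ∈ Δ ∧ ⟪x, x⟫ = 2}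

namespace IsRootSystem

variable (hrs : IsRootSystem Δ)
include hrs

lemma neg_mem {x : E} (hx : x ∈ Δ) : -x ∈ Δ := by
  have hxx : ⟪x, x⟫ ≠ 0 := (inner_self_ne_zero (𝕜 := ℝ)).mpr fun h => hrs.nonzero (h ▸ hx)
  have := hrs.reflect x hx x hx
  rwa [mul_div_assoc, div_self hxx, mul_one, two_smul, sub_add_cancel_left] at this

lemma neg_mem_longRoots {x : E} (hx : x ∈ longRoots Δ) : -x ∈ longRoots Δ :=
  ⟨hrs.neg_mem hx.1, by rw [inner_neg_neg, hx.2]⟩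

lemma exists_int_inner_of_mem_longRoots {x y : E} (hx : x ∈ longRoots Δ) (hy : y ∈ Δ) :
    ∃ n : ℤ, ⟪x, y⟫ = n := by
  obtain ⟨n, hn⟩ := hrs.crystallographic x hx.1 y hy
  exact ⟨n, by rw [← hn, hx.2]; ring⟩

lemma add_mem_of_inner_eq_neg_one {x y : E} (hx : x ∈ longRoots Δ) (hy : y ∈ Δ)
    (hxy : ⟪x, y⟫ = -1) : x + y ∈ Δ := by
  have := hrs.reflect x hx.1 y hy
  rwa [hxy, hx.2, show (2 : ℝ) * -1 / 2 = -1 by norm_num, neg_one_smul, sub_neg_eq_add,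
    add_comm] at this

lemma list_sum_mem_of_inner_self_eq_two (l : List E) (hl : ∀ x ∈ l, x ∈ longRoots Δ)
    (hl2 : ⟪l.sum, l.sum⟫ = 2) : l.sum ∈ Δ := by
  classical
  have hint : ∀ x ∈ longRoots Δ, ∀ y ∈ longRoots Δ, ∃ n : ℤ, ⟪x, y⟫ = n :=
    fun x hx y hy => hrs.exists_int_inner_of_mem_longRoots hx hy.1
  set v := l.sum
  obtain ⟨γ, hγl, hγ⟩ : ∃ γ ∈ l, 0 < ⟪v, γ⟫ := by
    refine List.exists_lt_of_sum_lt (l := l) (fun _ => (0 : ℝ)) (fun γ => ⟪v, γ⟫) ?_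
    have : ((l.map fun γ => ⟪v, γ⟫).sum) = 2 := by
      rw [← hl2, ← innerₗ_apply_apply, map_list_sum]; rfl
    simp [this]
  have hγL := hl γ hγl
  obtain ⟨m, hm⟩ := exists_int_inner_of_mem_closure hint
    ((AddSubgroup.closure _).list_sum_mem fun x hx => AddSubgroup.subset_closure (hl x hx))
    (AddSubgroup.subset_closure hγL)
  have hvγ : ⟪v - γ, v - γ⟫ = 4 - 2 * m := by
    rw [real_inner_sub_sub_self, hl2, hγL.2, hm]; ring
  have hm_pos : 0 < m := by exact_mod_cast hm ▸ hγ
  have hm_le : m ≤ 2 := by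
    have := real_inner_self_nonneg (x := v - γ)
    exact_mod_cast (by linarith : (m : ℝ) ≤ 2)
  obtain rfl | rfl : m = 1 ∨ m = 2 := by omega
  · have hrest : (l.erase γ).sum = v - γ := eq_sub_of_add_eq' (List.sum_erase hγl)
    have hrest_mem : v - γ ∈ Δ := by
      rw [← hrest]
      refine list_sum_mem_of_inner_self_eq_two (l.erase γ)
        (fun x hx => hl x (List.mem_of_mem_erase hx)) ?_
      rw [hrest, hvγ]; norm_num
    have hinner : ⟪γ, v - γ⟫ = -1 := by
      rw [inner_sub_right, real_inner_comm, hm, hγL.2]; norm_num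
    simpa only [add_sub_cancel] using hrs.add_mem_of_inner_eq_neg_one hγL hrest_mem hinner
  · have : v = γ := sub_eq_zero.mp <| (inner_self_eq_zero (𝕜 := ℝ)).mp (by rw [hvγ]; norm_num)
    exact this ▸ hγL.1
termination_by l.length
decreasing_by
  classical
  exact List.length_erase_of_mem hγl ▸ Nat.pred_lt (List.length_pos_of_mem hγl).ne'

lemma mem_of_mem_closure_longRoots {v : E} (hv : v ∈ AddSubgroup.closure (longRoots Δ))
    (hv2 : ⟪v, v⟫ = 2) : v ∈ Δ := by
  have hneg : -longRoots Δ = longRoots Δ :=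
    Set.ext fun x => ⟨fun hx => neg_neg x ▸ hrs.neg_mem_longRoots hx, hrs.neg_mem_longRoots⟩
  rw [← AddSubgroup.mem_toAddSubmonoid, AddSubgroup.closure_toAddSubmonoid, hneg,
    Set.union_self] at hv
  obtain ⟨l, hl, rfl⟩ := AddSubmonoid.exists_list_of_mem_closure hv
  exact hrs.list_sum_mem_of_inner_self_eq_two l hl hv2

end IsRootSystem

end RootSystem

theorem stmt0_general {E : Type*} [NormedAddCommGroup E] [InnerProductSpace ℝ E]
    (Δ : Set E) (hrs : IsRootSystem Δ)
    (α β : E)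
    (hαshort : ⟪α, α⟫ = 1) (hβshort : ⟪β, β⟫ = 1)
    (hne : α ≠ β) (hne' : α ≠ -β)
    (hQL : α - β ∈ AddSubgroup.closure {x | x ∈ Δ ∧ ⟪x, x⟫ = 2}) :
    ⟪α, β⟫ = 0 ∧ α - β ∈ Δ ∧ ⟪α - β, α - β⟫ = 2 := by
  obtain ⟨k, hk⟩ := exists_inner_self_eq_two_mul_of_mem_closure (S := longRoots Δ)
    (fun x hx => hx.2) (fun x hx y hy => hrs.exists_int_inner_of_mem_longRoots hx hy.1) hQL
  have hsub : ⟪α - β, α - β⟫ = 2 - 2 * ⟪α, β⟫ := by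
    rw [real_inner_sub_sub_self, hαshort, hβshort]; ring
  have hadd : ⟪α + β, α + β⟫ = 2 + 2 * ⟪α, β⟫ := by
    rw [real_inner_add_add_self, hαshort, hβshort]; ring
  have hsub_pos : 0 < ⟪α - β, α - β⟫ := real_inner_self_pos.mpr (sub_ne_zero.mpr hne)
  have hadd_pos : 0 < ⟪α + β, α + β⟫ :=
    real_inner_self_pos.mpr (by rwa [← sub_neg_eq_add, sub_ne_zero])
  have hk1 : k = 1 := by
    have h0 : (0 : ℝ) < k := by linarith
    have h2 : (k : ℝ) < 2 := by linarith
    have : 0 < k ∧ k < 2 := ⟨by exact_mod_cast h0, by exact_mod_cast h2⟩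
    omega
  have horth : ⟪α, β⟫ = 0 := by rw [hk1, Int.cast_one] at hk; linarith
  have hnorm : ⟪α - β, α - β⟫ = 2 := by rw [hsub, horth]; ring
  exact ⟨horth, hrs.mem_of_mem_closure_longRoots hQL hnorm, hnorm⟩

/-- In an irreducible root system, not of type `G₂`, normalized so that
long roots have squared length `2` (hence short roots have squared length `1`),
if `α, β` are short roots with `α ≠ ±β` whose difference lies in the lattice `Q_L`
generated by the long roots, then `⟪α, β⟫ = 0` and `α - β` is a long root. -/
theorem stmt0 {E : Type*} [NormedAddCommGroup E] [InnerProductSpace ℝ E]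
    (Δ : Set E) (hrs : IsRootSystem Δ) (hirr : IsIrreducibleRootSystem Δ)
    (hnotG2 : ∀ x ∈ Δ, ⟪x, x⟫ = 2 ∨ ⟪x, x⟫ = 1)
    (α β : E) (hα : α ∈ Δ) (hβ : β ∈ Δ)
    (hαshort : ⟪α, α⟫ = 1) (hβshort : ⟪β, β⟫ = 1)
    (hne : α ≠ β) (hne' : α ≠ -β)
    (hQL : α - β ∈ AddSubgroup.closure {x | x ∈ Δ ∧ ⟪x, x⟫ = 2}) :
    ⟪α, β⟫ = 0 ∧ α - β ∈ Δ ∧ ⟪α - β, α - β⟫ = 2 :=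
  stmt0_general Δ hrs α β hαshort hβshort hne hne' hQL
end

section
/- Let Δ be the root system of type G₂ with long roots of squared length 2 (so short roots have squared length 2/3). If α and β are short roots with α ≠ ±β and α - β lies in the lattice generated by the long roots, then ⟨α, β⟩ = -1/3 and α - β is a long root. -/
open scoped RealInnerProductSpace

set_option linter.unusedSectionVars false
set_option linter.unusedVariables false

namespace G2aux
variable {E : Type*} [NormedAddCommGroup E] [InnerProductSpace ℝ E]

lemma mem_of_eq {Δ : Set E} {x y : E} (h : x ∈ Δ) (e : y = x) : y ∈ Δ := e ▸ h

lemma neg_mem {Δ : Set E} (h : IsRootSystem Δ) {x : E} (hx : x ∈ Δ) : -x ∈ Δ := by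
  have hx0 : x ≠ 0 := fun h0 => h.nonzero (h0 ▸ hx)
  have hxx : ⟪x,x⟫ ≠ (0:ℝ) := fun h0 => hx0 (inner_self_eq_zero.mp h0)
  have hr := h.reflect x hx x hx
  have hc : 2 * ⟪x,x⟫ / ⟪x,x⟫ = (2:ℝ) := by field_simp
  rw [hc] at hr
  exact mem_of_eq hr (by module)

lemma reflect' {Δ : Set E} (h : IsRootSystem Δ) {x y : E} (hx : x ∈ Δ) (hy : y ∈ Δ)
    (c : ℝ) (hc : 2 * ⟪x,y⟫ / ⟪x,x⟫ = c) : y - c • x ∈ Δ := by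
  rw [← hc]; exact h.reflect x hx y hy

set_option maxHeartbeats 1000000 in
lemma key {Δ : Set E} (hrs : IsRootSystem Δ) (hcard : Δ.ncard = 12)
    {a l b : E} (ha : a ∈ Δ) (hl : l ∈ Δ) (hb : b ∈ Δ)
    (haa : ⟪a,a⟫ = 2/3) (hll : ⟪l,l⟫ = 2) (hla : ⟪l,a⟫ = 1)
    (hbb : ⟪b,b⟫ = 2/3) (hab : ⟪a,b⟫ = -(1/3)) : a - b ∈ Δ := by
  have hal : ⟪a,l⟫ = 1 := by rw [real_inner_comm]; exact hla
  have m5 : a - l ∈ Δ :=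
    mem_of_eq (reflect' hrs hl ha 1 (by rw [hla, hll]; norm_num)) (by module)
  have m6 : l - a ∈ Δ := mem_of_eq (neg_mem hrs m5) (by module)
  have m7 : l - (3:ℝ) • a ∈ Δ := reflect' hrs ha hl 3 (by rw [hal, haa]; norm_num)
  have m9 : l - (2:ℝ) • a ∈ Δ := by
    refine mem_of_eq (reflect' hrs ha m6 1 ?_) (by module)
    rw [inner_sub_right, hal, haa]; norm_num
  have m11 : (2:ℝ) • l - (3:ℝ) • a ∈ Δ := by
    refine mem_of_eq (reflect' hrs hl m7 (-1) ?_) (by module)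
    rw [inner_sub_right, real_inner_smul_right, hll, hla]; norm_num
  set S : Set E := {a, -a, l, -l, a - l, l - a, l - (3:ℝ)•a, (3:ℝ)•a - l,
    l - (2:ℝ)•a, (2:ℝ)•a - l, (2:ℝ)•l - (3:ℝ)•a, (3:ℝ)•a - (2:ℝ)•l} with hS
  have hsub : S ⊆ Δ := by
    intro x hx
    simp only [hS, Set.mem_insert_iff, Set.mem_singleton_iff] at hx
    rcases hx with rfl|rfl|rfl|rfl|rfl|rfl|rfl|rfl|rfl|rfl|rfl|rfl
    · exact ha
    · exact neg_mem hrs ha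
    · exact hl
    · exact neg_mem hrs hl
    · exact m5
    · exact m6
    · exact m7
    · exact mem_of_eq (neg_mem hrs m7) (by module)
    · exact m9
    · exact mem_of_eq (neg_mem hrs m9) (by module)
    · exact m11
    · exact mem_of_eq (neg_mem hrs m11) (by module)
  set c : E := (6:ℝ) • a + l with hcdef
  have hca : ⟪c, a⟫ = 5 := by
    rw [hcdef, inner_add_left, real_inner_smul_left, haa, hla]; norm_num
  have hcl : ⟪c, l⟫ = 8 := by
    rw [hcdef, inner_add_left, real_inner_smul_left, hal, hll]; norm_num
  have hv0 : ⟪c, (a : E)⟫ = (5 : ℝ) := hca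
  have hv1 : ⟪c, (-a : E)⟫ = (-5 : ℝ) := by rw [inner_neg_right, hca]
  have hv2 : ⟪c, (l : E)⟫ = (8 : ℝ) := hcl
  have hv3 : ⟪c, (-l : E)⟫ = (-8 : ℝ) := by rw [inner_neg_right, hcl]
  have hv4 : ⟪c, (a - l : E)⟫ = (-3 : ℝ) := by rw [inner_sub_right, hca, hcl]; norm_num
  have hv5 : ⟪c, (l - a : E)⟫ = (3 : ℝ) := by rw [inner_sub_right, hca, hcl]; norm_num
  have hv6 : ⟪c, (l - (3:ℝ)•a : E)⟫ = (-7 : ℝ) := by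
    rw [inner_sub_right, real_inner_smul_right, hca, hcl]; norm_num
  have hv7 : ⟪c, ((3:ℝ)•a - l : E)⟫ = (7 : ℝ) := by
    rw [inner_sub_right, real_inner_smul_right, hca, hcl]; norm_num
  have hv8 : ⟪c, (l - (2:ℝ)•a : E)⟫ = (-2 : ℝ) := by
    rw [inner_sub_right, real_inner_smul_right, hca, hcl]; norm_num
  have hv9 : ⟪c, ((2:ℝ)•a - l : E)⟫ = (2 : ℝ) := by
    rw [inner_sub_right, real_inner_smul_right, hca, hcl]; norm_num
  have hv10 : ⟪c, ((2:ℝ)•l - (3:ℝ)•a : E)⟫ = (1 : ℝ) := by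
    rw [inner_sub_right, real_inner_smul_right, real_inner_smul_right, hca, hcl]; norm_num
  have hv11 : ⟪c, ((3:ℝ)•a - (2:ℝ)•l : E)⟫ = (-1 : ℝ) := by
    rw [inner_sub_right, real_inner_smul_right, real_inner_smul_right, hca, hcl]; norm_num
  have himg : (fun v => ⟪c, v⟫) '' S = ({5, -5, 8, -8, -3, 3, -7, 7, -2, 2, 1, -1} : Set ℝ) := by
    rw [hS]
    simp only [Set.image_insert_eq, Set.image_singleton, hv0, hv1, hv2, hv3, hv4, hv5,
      hv6, hv7, hv8, hv9, hv10, hv11]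
  have h12 : ({5, -5, 8, -8, -3, 3, -7, 7, -2, 2, 1, -1} : Set ℝ).ncard = 12 := by
    rw [Set.ncard_insert_of_notMem (by norm_num) (Set.toFinite _),
        Set.ncard_insert_of_notMem (by norm_num) (Set.toFinite _),
        Set.ncard_insert_of_notMem (by norm_num) (Set.toFinite _),
        Set.ncard_insert_of_notMem (by norm_num) (Set.toFinite _),
        Set.ncard_insert_of_notMem (by norm_num) (Set.toFinite _),
        Set.ncard_insert_of_notMem (by norm_num) (Set.toFinite _),
        Set.ncard_insert_of_notMem (by norm_num) (Set.toFinite _),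
        Set.ncard_insert_of_notMem (by norm_num) (Set.toFinite _),
        Set.ncard_insert_of_notMem (by norm_num) (Set.toFinite _),
        Set.ncard_insert_of_notMem (by norm_num) (Set.toFinite _),
        Set.ncard_insert_of_notMem (by norm_num) (Set.toFinite _),
        Set.ncard_singleton]
  have hge : 12 ≤ S.ncard := by
    have h1 := Set.ncard_image_le (f := fun v => ⟪c, v⟫) (s := S) (Set.toFinite _)
    rw [himg, h12] at h1
    exact h1
  have hSΔ : S = Δ := Set.eq_of_subset_of_ncard_le hsub (by rw [hcard]; exact hge) hrs.finite
  rw [← hSΔ, hS] at hb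
  simp only [Set.mem_insert_iff, Set.mem_singleton_iff] at hb
  rcases hb with rfl|rfl|rfl|rfl|rfl|rfl|rfl|rfl|rfl|rfl|rfl|rfl
  · rw [haa] at hab; norm_num at hab
  · rw [inner_neg_right, haa] at hab; norm_num at hab
  · rw [hll] at hbb; norm_num at hbb
  · rw [inner_neg_neg, hll] at hbb; norm_num at hbb
  · exact mem_of_eq hl (by module)
  · rw [inner_sub_right, hal, haa] at hab; norm_num at hab
  · rw [inner_sub_left, inner_sub_right, inner_sub_right, real_inner_smul_left,
      real_inner_smul_right, real_inner_smul_right, real_inner_smul_left, haa, hll, hla, hal] at hbb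
    norm_num at hbb
  · rw [inner_sub_left, inner_sub_right, inner_sub_right, real_inner_smul_left,
      real_inner_smul_right, real_inner_smul_right, real_inner_smul_left, haa, hll, hla, hal] at hbb
    norm_num at hbb
  · exact mem_of_eq (neg_mem hrs m7) (by module)
  · rw [inner_sub_right, real_inner_smul_right, hal, haa] at hab; norm_num at hab
  · rw [inner_sub_right, real_inner_smul_right, real_inner_smul_right, haa, hal] at hab
    norm_num at hab
  · rw [inner_sub_right, real_inner_smul_right, real_inner_smul_right, haa, hal] at hab
    norm_num at hab

lemma closure_pair_int {Δ : Set E} (hrs : IsRootSystem Δ) (y : E) (hy : y ∈ Δ)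
    {v : E} (hv : v ∈ AddSubgroup.closure {x | x ∈ Δ ∧ ⟪x,x⟫ = 2}) :
    ∃ m : ℤ, ⟪v, y⟫ = m := by
  let f : E →+ ℝ := { toFun := fun w => ⟪w, y⟫, map_zero' := inner_zero_left y,
                      map_add' := fun u w => inner_add_left u w y }
  have hle : AddSubgroup.closure {x | x ∈ Δ ∧ ⟪x,x⟫ = 2}
      ≤ AddSubgroup.comap f (AddSubgroup.zmultiples (1:ℝ)) := by
    rw [AddSubgroup.closure_le]
    rintro x ⟨hxΔ, hxx⟩
    obtain ⟨n, hn⟩ := hrs.crystallographic x hxΔ y hy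
    have hxy : ⟪x, y⟫ = (n:ℝ) := by
      rw [hxx] at hn; rw [show (2:ℝ) * ⟪x,y⟫ / 2 = ⟪x,y⟫ from by ring] at hn; exact hn
    refine AddSubgroup.mem_comap.mpr (AddSubgroup.mem_zmultiples_iff.mpr ⟨n, ?_⟩)
    simp [f, hxy]
  have h2 := AddSubgroup.mem_zmultiples_iff.mp (AddSubgroup.mem_comap.mp (hle hv))
  obtain ⟨n, hn⟩ := h2
  refine ⟨n, ?_⟩
  have : (n:ℝ) = f v := by simpa using hn
  simpa [f] using this.symm

lemma exists_long {Δ : Set E} (hrs : IsRootSystem Δ) {v : E}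
    (hv : v ∈ AddSubgroup.closure {x | x ∈ Δ ∧ ⟪x,x⟫ = 2}) (hvv : ⟪v, v⟫ ≠ 0) :
    ∃ l ∈ Δ, ⟪l, l⟫ = 2 ∧ ⟪l, v⟫ ≠ 0 := by
  by_contra h
  push_neg at h
  let f : E →+ ℝ := { toFun := fun w => ⟪w, v⟫, map_zero' := inner_zero_left v,
                      map_add' := fun u w => inner_add_left u w v }
  have hle : AddSubgroup.closure {x | x ∈ Δ ∧ ⟪x,x⟫ = 2} ≤ AddSubgroup.comap f ⊥ := by
    rw [AddSubgroup.closure_le]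
    rintro x ⟨hxΔ, hxx⟩
    have : f x = 0 := h x hxΔ hxx
    simpa [AddSubgroup.mem_comap] using this
  have := AddSubgroup.mem_bot.mp (AddSubgroup.mem_comap.mp (hle hv))
  exact hvv (by simpa [f] using this)


lemma crys_long {Δ : Set E} (hrs : IsRootSystem Δ) {x y : E} (hx : x ∈ Δ) (hy : y ∈ Δ)
    (hxx : ⟪x,x⟫ = 2) : ∃ n : ℤ, ⟪x, y⟫ = n := by
  obtain ⟨n, hn⟩ := hrs.crystallographic x hx y hy
  rw [hxx, show (2:ℝ) * ⟪x,y⟫ / 2 = ⟪x,y⟫ from by ring] at hn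
  exact ⟨n, hn⟩

end G2aux

open G2aux in
/-- In the root system of type `G₂`, normalized so that long roots have
squared length `2` (so short roots have squared length `2/3`), if `α, β` are short
roots with `α ≠ ±β` whose difference lies in the lattice generated by the long roots,
then `⟪α, β⟫ = -1/3` and `α - β` is a long root. -/
theorem stmt1 {E : Type*} [NormedAddCommGroup E] [InnerProductSpace ℝ E]
    (Δ : Set E) (hrs : IsRootSystem Δ)
    (hG2 : ∀ x ∈ Δ, ⟪x, x⟫ = 2 ∨ ⟪x, x⟫ = 2/3)
    (hcard : Δ.ncard = 12)
    (α β : E) (hα : α ∈ Δ) (hβ : β ∈ Δ)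
    (hαshort : ⟪α, α⟫ = 2/3) (hβshort : ⟪β, β⟫ = 2/3)
    (hne : α ≠ β) (hne' : α ≠ -β)
    (hQL : α - β ∈ AddSubgroup.closure {x | x ∈ Δ ∧ ⟪x, x⟫ = 2}) :
    ⟪α, β⟫ = -(1/3) ∧ α - β ∈ Δ ∧ ⟪α - β, α - β⟫ = 2 := by
  have hcomm : ⟪β, α⟫ = ⟪α, β⟫ := real_inner_comm α β
  obtain ⟨m, hm⟩ := closure_pair_int hrs α hα hQL
  have hm' : 2/3 - ⟪α, β⟫ = (m:ℝ) := by
    rw [← hm, inner_sub_left, hαshort, hcomm]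
  obtain ⟨n, hn⟩ := hrs.crystallographic α hα β hβ
  have hn' : 3 * ⟪α, β⟫ = (n:ℝ) := by
    rw [← hn, hαshort]; ring
  have hd1' : ⟪α - β, α - β⟫ = 4/3 - 2*⟪α,β⟫ := by
    rw [inner_sub_left, inner_sub_right, inner_sub_right, hαshort, hβshort, hcomm]; ring
  have hd2' : ⟪α + β, α + β⟫ = 4/3 + 2*⟪α,β⟫ := by
    rw [inner_add_left, inner_add_right, inner_add_right, hαshort, hβshort, hcomm]; ring
  have h2 : (0:ℝ) ≤ 4/3 - 2*⟪α,β⟫ := hd1' ▸ real_inner_self_nonneg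
  have h3 : (0:ℝ) ≤ 4/3 + 2*⟪α,β⟫ := hd2' ▸ real_inner_self_nonneg
  have hrel : 3*m + n = 2 := by
    have : ((3*m + n : ℤ) : ℝ) = 2 := by push_cast; rw [← hm', ← hn']; ring
    exact_mod_cast this
  have hnb1 : (-2:ℤ) ≤ n := by
    have : (-2:ℝ) ≤ (n:ℝ) := by rw [← hn']; linarith
    exact_mod_cast this
  have hnb2 : n ≤ (2:ℤ) := by
    have : (n:ℝ) ≤ (2:ℝ) := by rw [← hn']; linarith
    exact_mod_cast this
  have hn2 : n = -1 ∨ n = 2 := by omega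
  have ht : ⟪α, β⟫ = -(1/3) := by
    rcases hn2 with h|h
    · have : (n:ℝ) = -1 := by exact_mod_cast h
      rw [this] at hn'; linarith
    · exfalso
      have hh : (n:ℝ) = 2 := by exact_mod_cast h
      rw [hh] at hn'
      have h0 : ⟪α - β, α - β⟫ = 0 := by rw [hd1']; linarith
      exact hne (sub_eq_zero.mp (inner_self_eq_zero.mp h0))
  have hβα : ⟪β, α⟫ = -(1/3) := hcomm.trans ht
  have hδ : ⟪α - β, α - β⟫ = 2 := by rw [hd1', ht]; norm_num
  refine ⟨ht, ?_, hδ⟩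
  obtain ⟨l₀, hl₀Δ, hl₀2, hl₀ne⟩ := exists_long hrs hQL (by rw [hδ]; norm_num)
  obtain ⟨n₁, hn₁⟩ := crys_long hrs hl₀Δ hα hl₀2
  obtain ⟨n₂, hn₂⟩ := crys_long hrs hl₀Δ hβ hl₀2
  have hnene : n₁ ≠ n₂ := by
    intro h
    apply hl₀ne
    rw [inner_sub_right, hn₁, hn₂, h, sub_self]
  have hbound : ∀ (k : ℤ) (y : E), ⟪y,y⟫ = 2/3 → ⟪l₀, y⟫ = k → k = -1 ∨ k = 0 ∨ k = 1 := by
    intro k y hy hk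
    have hcs := real_inner_mul_inner_self_le l₀ y
    rw [hk, hl₀2, hy] at hcs
    have hcs' : (k:ℝ)*(k:ℝ) ≤ 4/3 := by linarith
    have hk2 : k * k < 2 := by
      have : ((k*k : ℤ):ℝ) < 2 := by push_cast; linarith
      exact_mod_cast this
    have h1 : (-1:ℤ) ≤ k := by nlinarith
    have h2 : k ≤ (1:ℤ) := by nlinarith
    omega
  have hb₁ := hbound n₁ α hαshort hn₁
  have hb₂ := hbound n₂ β hβshort hn₂
  rcases hb₁ with h1|h1|h1
  · -- ⟪l₀, α⟫ = -1 : use -l₀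
    refine key hrs hcard hα (neg_mem hrs hl₀Δ) hβ hαshort ?_ ?_ hβshort ht
    · rw [inner_neg_neg]; exact hl₀2
    · rw [inner_neg_left, hn₁, h1]; norm_num
  · -- ⟪l₀, α⟫ = 0, so n₂ = ±1, work with β as base
    rcases hb₂ with h2|h2|h2
    · have hmem : β - α ∈ Δ := by
        refine key hrs hcard hβ (neg_mem hrs hl₀Δ) hα hβshort ?_ ?_ hαshort hβα
        · rw [inner_neg_neg]; exact hl₀2
        · rw [inner_neg_left, hn₂, h2]; norm_num
      exact mem_of_eq (neg_mem hrs hmem) (by module)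
    · exact absurd (h1.trans h2.symm) hnene
    · have hmem : β - α ∈ Δ := by
        refine key hrs hcard hβ hl₀Δ hα hβshort hl₀2 ?_ hαshort hβα
        rw [hn₂, h2]; norm_num
      exact mem_of_eq (neg_mem hrs hmem) (by module)
  · refine key hrs hcard hα hl₀Δ hβ hαshort hl₀2 ?_ hβshort ht
    rw [hn₁, h1]; norm_num
end
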